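/- The smoothed hinge loss ℓ (with parameter α > 0) is differentiable except at finitely many points, and any subderivative ℓ'(x) satisfies ℓ'(x)² ≤ (4/α)·ℓ(x); in particular for the derivative where it exists, (ℓ'(x))² ≤ (4/α)·ℓ(x) for all x where ℓ is differentiable. -/
import Mathlib

open Set Filter

/-- The smoothed hinge loss `ℓ` (parameter `α > 0`) is differentiable except at finitely many
points; every subderivative `g` of `ℓ` at any point `x` satisfies `g² ≤ (4/α)·ℓ(x)`; and in
particular wherever `ℓ` is differentiable, `(ℓ'(x))² ≤ (4/α)·ℓ(x)`. -/
theorem smoothed_hinge_selfbounded (α : ℝ) (hα : 0 < α) (ℓ : ℝ → ℝ)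
    (hℓ : ∀ x, ℓ x = if α < x then 0 else if 0 ≤ x then (α - x) ^ 2 / α else α - 2 * x) :
    (∃ S : Finset ℝ, ∀ x ∉ S, DifferentiableAt ℝ ℓ x) ∧
    (∀ x g : ℝ, (∀ y, ℓ x + g * (y - x) ≤ ℓ y) → g ^ 2 ≤ 4 / α * ℓ x) ∧
    (∀ x, DifferentiableAt ℝ ℓ x → (deriv ℓ x) ^ 2 ≤ 4 / α * ℓ x) := by
  have hα' : α ≠ 0 := ne_of_gt hα
  have ℓpos : ∀ y, α < y → ℓ y = 0 := fun y hy => by rw [hℓ, if_pos hy]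
  have ℓmid : ∀ y, 0 ≤ y → y ≤ α → ℓ y = (α - y) ^ 2 / α := fun y h0 h1 => by
    rw [hℓ, if_neg (not_lt.2 h1), if_pos h0]
  have ℓneg : ∀ y, y < 0 → ℓ y = α - 2 * y := fun y hy => by
    rw [hℓ, if_neg (by linarith), if_neg (not_le.2 hy)]
  refine ⟨⟨{0, α}, ?_⟩, ?_, ?_⟩
  · intro x hx
    simp only [Finset.mem_insert, Finset.mem_singleton, not_or] at hx
    obtain ⟨hx0, hxα⟩ := hx
    rcases lt_trichotomy x 0 with h | h | h
    · have heq : ℓ =ᶠ[nhds x] fun y => α - 2 * y := by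
        filter_upwards [Iio_mem_nhds h] with y hy using ℓneg y hy
      exact heq.differentiableAt_iff.2 (by fun_prop)
    · exact absurd h hx0
    · rcases lt_trichotomy x α with h2 | h2 | h2
      · have heq : ℓ =ᶠ[nhds x] fun y => (α - y) ^ 2 / α := by
          filter_upwards [Ioo_mem_nhds h h2] with y hy using ℓmid y hy.1.le hy.2.le
        exact heq.differentiableAt_iff.2 (by fun_prop)
      · exact absurd h2 hxα
      · have heq : ℓ =ᶠ[nhds x] fun _ => (0 : ℝ) := by
          filter_upwards [Ioi_mem_nhds h2] with y hy using ℓpos y hy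
        exact heq.differentiableAt_iff.2 (differentiableAt_const 0)
  · intro x g hsub
    rcases lt_or_ge x 0 with hx | hx0
    · -- x < 0 : g = -2
      have h1 := hsub (x / 2)
      have h2 := hsub (2 * x)
      rw [ℓneg (x / 2) (by linarith), ℓneg x hx] at h1
      rw [ℓneg (2 * x) (by linarith), ℓneg x hx] at h2
      have hg1 : g + 2 ≤ 0 := by nlinarith
      have hg2 : 0 ≤ g + 2 := by nlinarith
      have hg : g = -2 := by linarith
      rw [ℓneg x hx, hg, div_mul_eq_mul_div, le_div_iff₀ hα]
      nlinarith
    rcases le_or_gt x α with hxα | hxα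
    · -- 0 ≤ x ≤ α : g = -2(α-x)/α
      have hup : g ≤ -(2 * (α - x) / α) := by
        rcases eq_or_lt_of_le hxα with heq | hlt
        · subst heq
          have h1 := hsub (x + 1)
          rw [ℓmid x hx0 le_rfl, ℓpos (x + 1) (by linarith)] at h1
          have e : (x - x) ^ 2 / x = 0 := by simp
          simp only [sub_self] at h1 ⊢
          nlinarith
        · by_contra hcon
          push_neg at hcon
          have hh : 0 < α * g + 2 * (α - x) := by
            have h2 : α * (-(2 * (α - x) / α)) < α * g := (mul_lt_mul_iff_right₀ hα).2 hcon
            have h3 : α * (-(2 * (α - x) / α)) = -(2 * (α - x)) := by field_simp <;> ring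
            linarith
          set t := min (α - x) ((α * g + 2 * (α - x)) / 2) with htdef
          have ht0 : 0 < t := lt_min (by linarith) (by linarith)
          have ht1 : t ≤ α - x := min_le_left _ _
          have ht2 : t ≤ (α * g + 2 * (α - x)) / 2 := min_le_right _ _
          have key := hsub (x + t)
          rw [ℓmid x hx0 hxα, ℓmid (x + t) (by linarith) (by linarith)] at key
          have hmul := mul_le_mul_of_nonneg_right key hα.le
          have e1 : ((α - x) ^ 2 / α + g * (x + t - x)) * α = (α - x) ^ 2 + g * t * α := by
            field_simp <;> ring
          have e2 : (α - (x + t)) ^ 2 / α * α = (α - x - t) ^ 2 := by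
            field_simp <;> ring
          rw [e1, e2] at hmul
          nlinarith [mul_le_mul_of_nonneg_right ht2 ht0.le, mul_pos ht0 ht0]
      have hlo : -(2 * (α - x) / α) ≤ g := by
        rcases eq_or_lt_of_le hx0 with heq | hlt
        · subst heq
          have h1 := hsub (-1)
          rw [ℓmid 0 le_rfl hα.le, ℓneg (-1) (by norm_num)] at h1
          have e : (α - (0:ℝ)) ^ 2 / α = α := by field_simp <;> ring
          rw [e] at h1
          have e2 : -(2 * (α - (0:ℝ)) / α) = -2 := by field_simp <;> ring
          rw [e2]
          nlinarith
        · by_contra hcon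
          push_neg at hcon
          have hh : α * g + 2 * (α - x) < 0 := by
            have h2 : α * g < α * (-(2 * (α - x) / α)) := (mul_lt_mul_iff_right₀ hα).2 hcon
            have h3 : α * (-(2 * (α - x) / α)) = -(2 * (α - x)) := by field_simp <;> ring
            linarith
          set t := max (-x) ((α * g + 2 * (α - x)) / 2) with htdef
          have ht0 : t < 0 := max_lt (by linarith) (by linarith)
          have ht1 : -x ≤ t := le_max_left _ _
          have ht2 : (α * g + 2 * (α - x)) / 2 ≤ t := le_max_right _ _
          have key := hsub (x + t)
          rw [ℓmid x hx0 hxα, ℓmid (x + t) (by linarith) (by linarith)] at key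
          have hmul := mul_le_mul_of_nonneg_right key hα.le
          have e1 : ((α - x) ^ 2 / α + g * (x + t - x)) * α = (α - x) ^ 2 + g * t * α := by
            field_simp <;> ring
          have e2 : (α - (x + t)) ^ 2 / α * α = (α - x - t) ^ 2 := by
            field_simp <;> ring
          rw [e1, e2] at hmul
          nlinarith [mul_le_mul_of_nonpos_right ht2 ht0.le, mul_pos_of_neg_of_neg ht0 ht0]
      have hg : g = -(2 * (α - x) / α) := le_antisymm hup hlo
      rw [ℓmid x hx0 hxα, hg]
      have e : (-(2 * (α - x) / α)) ^ 2 = 4 / α * ((α - x) ^ 2 / α) := by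
        field_simp <;> ring
      rw [e]
    · -- x > α : g = 0
      have h1 := hsub ((x + α) / 2)
      have h2 := hsub (x + 1)
      rw [ℓpos ((x + α) / 2) (by linarith), ℓpos x hxα] at h1
      rw [ℓpos (x + 1) (by linarith), ℓpos x hxα] at h2
      have hg1 : 0 ≤ g := by nlinarith
      have hg2 : g ≤ 0 := by nlinarith
      have hg : g = 0 := le_antisymm hg2 hg1
      rw [ℓpos x hxα, hg]
      norm_num
  · intro x hdiff
    rcases lt_trichotomy x 0 with hx | hx | hx
    · have heq : ℓ =ᶠ[nhds x] fun y => α - 2 * y := by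
        filter_upwards [Iio_mem_nhds hx] with y hy using ℓneg y hy
      have hd : HasDerivAt (fun y => α - 2 * y) (-2) x := by
        simpa using ((hasDerivAt_id x).const_mul (2 : ℝ)).const_sub α
      rw [heq.deriv_eq, hd.deriv, ℓneg x hx, div_mul_eq_mul_div, le_div_iff₀ hα]
      nlinarith
    · subst hx
      have h1 : HasDerivWithinAt ℓ (deriv ℓ 0) (Iio 0) 0 := hdiff.hasDerivAt.hasDerivWithinAt
      have h2 : HasDerivWithinAt (fun y => α - 2 * y) (deriv ℓ 0) (Iio 0) 0 :=
        h1.congr (fun y hy => (ℓneg y hy).symm)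
          (by rw [ℓmid 0 le_rfl hα.le]; field_simp <;> ring)
      have h3 : HasDerivWithinAt (fun y => α - 2 * y) (-2) (Iio 0) 0 :=
        (by simpa using ((hasDerivAt_id (0 : ℝ)).const_mul (2 : ℝ)).const_sub α :
          HasDerivAt (fun y => α - 2 * y) (-2) 0).hasDerivWithinAt
      have hu := (uniqueDiffWithinAt_Iio (0 : ℝ)).eq h2.hasFDerivWithinAt h3.hasFDerivWithinAt
      have hd : deriv ℓ 0 = -2 := by
        have := congrArg (fun L : ℝ →L[ℝ] ℝ => L 1) hu
        simpa using this
      rw [hd, ℓmid 0 le_rfl hα.le]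
      have e : 4 / α * ((α - (0 : ℝ)) ^ 2 / α) = 4 := by field_simp <;> ring
      rw [e]; norm_num
    · rcases lt_trichotomy x α with h2 | h2 | h2
      · have heq : ℓ =ᶠ[nhds x] fun y => (α - y) ^ 2 / α := by
          filter_upwards [Ioo_mem_nhds hx h2] with y hy using ℓmid y hy.1.le hy.2.le
        have hd : HasDerivAt (fun y => (α - y) ^ 2 / α)
            (((2 : ℕ) : ℝ) * (α - x) ^ (2 - 1) * (0 - 1) / α) x :=
          (((hasDerivAt_const x α).sub (hasDerivAt_id x)).pow 2).div_const α
        rw [heq.deriv_eq, hd.deriv, ℓmid x hx.le h2.le]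
        have e : (((2 : ℕ) : ℝ) * (α - x) ^ (2 - 1) * (0 - 1) / α) ^ 2
            = 4 / α * ((α - x) ^ 2 / α) := by
          push_cast; field_simp <;> ring
        rw [e]
      · subst h2
        have h1 : HasDerivWithinAt ℓ (deriv ℓ x) (Ioi x) x := hdiff.hasDerivAt.hasDerivWithinAt
        have hℓx : ℓ x = 0 := by rw [ℓmid x hx.le le_rfl]; simp
        have h2' : HasDerivWithinAt (fun _ => (0 : ℝ)) (deriv ℓ x) (Ioi x) x :=
          h1.congr (fun y hy => (ℓpos y hy).symm) hℓx.symm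
        have h3 : HasDerivWithinAt (fun _ => (0 : ℝ)) 0 (Ioi x) x :=
          (hasDerivAt_const x (0 : ℝ)).hasDerivWithinAt
        have hu := (uniqueDiffWithinAt_Ioi x).eq h2'.hasFDerivWithinAt h3.hasFDerivWithinAt
        have hd : deriv ℓ x = 0 := by
          have := congrArg (fun L : ℝ →L[ℝ] ℝ => L 1) hu
          simpa using this
        rw [hd, hℓx]
        norm_num
      · have heq : ℓ =ᶠ[nhds x] fun _ => (0 : ℝ) := by
          filter_upwards [Ioi_mem_nhds h2] with y hy using ℓpos y hy
        rw [heq.deriv_eq, deriv_const, ℓpos x h2]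
        norm_num
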